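/- arXiv:1608.01381 — 8 statements merged into one kernel-verified Lean document; each statement's English description precedes it below -/
import Mathlib

section
/- Let q ∈ ℂ and set v = 2 + q. Let S : ℤ → ℂ satisfy S(0) = 1, S(1) = v, and S(k+1) = v·S(k) − S(k−1) for every integer k. Then for every natural number k one has S(k) = Σ_{i=0}^{k} C(k+1+i, 2i+1) · q^i, where C(·,·) denotes the binomial coefficient. -/
noncomputable def chebF (q : ℂ) (k : ℕ) : ℂ :=
  ∑ i ∈ Finset.range (k + 1), (Nat.choose (k + 1 + i) (2 * i + 1) : ℂ) * q ^ i

lemma cheb_pascal (m j : ℕ) :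
    (m+1+1).choose (j+1+1) + m.choose (j+1+1) = 2 * (m+1).choose (j+1+1) + m.choose j := by
  have h1 := Nat.choose_succ_succ (m+1) (j+1)
  have h2 := Nat.choose_succ_succ m j
  have h3 := Nat.choose_succ_succ m (j+1)
  simp only [Nat.succ_eq_add_one] at h1 h2 h3
  omega

lemma cheb_coeff (k i : ℕ) :
    (k+3+(i+1)).choose (2*(i+1)+1) + (k+1+(i+1)).choose (2*(i+1)+1)
      = 2 * (k+2+(i+1)).choose (2*(i+1)+1) + (k+2+i).choose (2*i+1) := by
  have e1 : k+3+(i+1) = (k+2+i)+1+1 := by omega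
  have e2 : 2*(i+1)+1 = (2*i+1)+1+1 := by omega
  have e3 : k+1+(i+1) = k+2+i := by omega
  have e4 : k+2+(i+1) = (k+2+i)+1 := by omega
  rw [e1, e2, e3, e4]
  exact cheb_pascal _ _

lemma chebF_rec (q : ℂ) (k : ℕ) :
    chebF q (k+2) + chebF q k = (2+q) * chebF q (k+1) := by
  have hA : chebF q (k+2)
      = ∑ i ∈ Finset.range (k+1+1+1), ((k+3+i).choose (2*i+1) : ℂ) * q ^ i := by
    unfold chebF
    apply Finset.sum_congr (by ring_nf)
    intro i _
    have e : k+2+1+i = k+3+i := by omega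
    rw [e]
  have hC : (∑ i ∈ Finset.range (k+1+1+1), ((k+1+i).choose (2*i+1) : ℂ) * q ^ i)
      = chebF q k := by
    unfold chebF
    rw [Finset.sum_range_succ, Finset.sum_range_succ]
    have z1 : (k+1+(k+1)).choose (2*(k+1)+1) = 0 :=
      Nat.choose_eq_zero_of_lt (by omega)
    have z2 : (k+1+(k+1+1)).choose (2*(k+1+1)+1) = 0 :=
      Nat.choose_eq_zero_of_lt (by omega)
    rw [z1, z2]
    push_cast
    ring
  have hB : (∑ i ∈ Finset.range (k+1+1+1), ((k+2+i).choose (2*i+1) : ℂ) * q ^ i)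
      = chebF q (k+1) := by
    unfold chebF
    rw [Finset.sum_range_succ]
    have z : (k+2+(k+1+1)).choose (2*(k+1+1)+1) = 0 :=
      Nat.choose_eq_zero_of_lt (by omega)
    rw [z]
    push_cast
    rw [zero_mul, add_zero]
  rw [hA, ← hB, ← hC]
  rw [Finset.sum_range_succ' (fun i => ((k+3+i).choose (2*i+1) : ℂ) * q ^ i) (k+1+1)]
  rw [Finset.sum_range_succ' (fun i => ((k+1+i).choose (2*i+1) : ℂ) * q ^ i) (k+1+1)]
  rw [Finset.sum_range_succ' (fun i => ((k+2+i).choose (2*i+1) : ℂ) * q ^ i) (k+1+1)]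
  have key : ∀ i ∈ Finset.range (k+1+1),
      ((k+3+(i+1)).choose (2*(i+1)+1) : ℂ) * q ^ (i+1)
        + ((k+1+(i+1)).choose (2*(i+1)+1) : ℂ) * q ^ (i+1)
      = 2 * (((k+2+(i+1)).choose (2*(i+1)+1) : ℂ) * q ^ (i+1))
        + (((k+2+i).choose (2*i+1) : ℂ) * q ^ i) * q := by
    intro i _
    have h := cheb_coeff k i
    have h' : ((k+3+(i+1)).choose (2*(i+1)+1) : ℂ) + ((k+1+(i+1)).choose (2*(i+1)+1) : ℂ)
        = 2 * ((k+2+(i+1)).choose (2*(i+1)+1) : ℂ) + ((k+2+i).choose (2*i+1) : ℂ) := by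
      exact_mod_cast congrArg (Nat.cast : ℕ → ℂ) h
    calc ((k+3+(i+1)).choose (2*(i+1)+1) : ℂ) * q ^ (i+1)
          + ((k+1+(i+1)).choose (2*(i+1)+1) : ℂ) * q ^ (i+1)
        = (((k+3+(i+1)).choose (2*(i+1)+1) : ℂ)
            + ((k+1+(i+1)).choose (2*(i+1)+1) : ℂ)) * q ^ (i+1) := by ring
      _ = (2 * ((k+2+(i+1)).choose (2*(i+1)+1) : ℂ)
            + ((k+2+i).choose (2*i+1) : ℂ)) * q ^ (i+1) := by rw [h']
      _ = _ := by ring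
  have hsum := Finset.sum_congr rfl key
  rw [Finset.sum_add_distrib, Finset.sum_add_distrib, ← Finset.sum_mul,
      ← Finset.mul_sum] at hsum
  have hD : (∑ i ∈ Finset.range (k+1+1), ((k+2+i).choose (2*i+1) : ℂ) * q ^ i)
        + ((k+2+(k+1+1)).choose (2*(k+1+1)+1) : ℂ) * q ^ (k+1+1)
      = (∑ i ∈ Finset.range (k+1+1), ((k+2+(i+1)).choose (2*(i+1)+1) : ℂ) * q ^ (i+1))
        + ((k+2+0).choose (2*0+1) : ℂ) * q ^ 0 := by
    rw [← Finset.sum_range_succ (fun i => ((k+2+i).choose (2*i+1) : ℂ) * q ^ i) (k+1+1),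
        Finset.sum_range_succ' (fun i => ((k+2+i).choose (2*i+1) : ℂ) * q ^ i) (k+1+1)]
  have zlast : ((k+2+(k+1+1)).choose (2*(k+1+1)+1) : ℂ) = 0 := by
    norm_cast
    exact Nat.choose_eq_zero_of_lt (by omega)
  rw [zlast, zero_mul, add_zero] at hD
  have hconst : ((k+3+0).choose (2*0+1) : ℂ) * q ^ 0 + ((k+1+0).choose (2*0+1) : ℂ) * q ^ 0
      = 2 * (((k+2+0).choose (2*0+1) : ℂ) * q ^ 0) := by
    simp [Nat.choose_one_right]
    push_cast
    ring
  linear_combination hsum + q * hD + hconst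

theorem chebyshev_expansion_at_two_plus_q
    (q v : ℂ) (hv : v = 2 + q)
    (S : ℤ → ℂ)
    (h0 : S 0 = 1) (h1 : S 1 = v)
    (hrec : ∀ k : ℤ, S (k + 1) = v * S k - S (k - 1)) :
    ∀ k : ℕ, S k = ∑ i ∈ Finset.range (k + 1),
      (Nat.choose (k + 1 + i) (2 * i + 1) : ℂ) * q ^ i := by
  have key : ∀ k : ℕ, S k = chebF q k ∧ S ((k : ℤ) + 1) = chebF q (k + 1) := by
    intro k
    induction k with
    | zero =>
      constructor
      · rw [show ((0:ℕ):ℤ) = 0 by norm_num, h0]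
        simp [chebF]
      · rw [show ((0:ℕ):ℤ) + 1 = 1 by norm_num, h1, hv]
        simp [chebF, Finset.sum_range_succ]
    | succ k ih =>
      constructor
      · have := ih.2
        rw [show ((k+1:ℕ):ℤ) = (k:ℤ) + 1 by push_cast; ring]
        exact this
      · have hr := hrec ((k:ℤ)+1)
        rw [add_sub_cancel_right] at hr
        rw [show ((k+1:ℕ):ℤ) + 1 = (k:ℤ) + 1 + 1 by push_cast; ring, hr, ih.1, ih.2, hv]
        have h2 : chebF q (k+1+1) = (2+q) * chebF q (k+1) - chebF q k := by
          have := chebF_rec q k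
          rw [show k+1+1 = k+2 by omega]
          linear_combination this
        exact h2.symm
  intro k
  rw [(key k).1]
  rfl
end

section
/- Let n ≥ 0 be an integer and let S : ℤ → ℂ satisfy S(0) = 1, S(1) = v, and S(k+1) = v·S(k) − S(k−1) for every integer k, where v ∈ ℂ. Then S(n) − S(n−1) = Π_{j=1}^{n} ( v − 2·cos((2j−1)π/(2n+1)) ). -/
/-!
Up to the normalisation `S_k(2x) = U_k(x)`, `S_n − S_{n−1}` is the Chebyshev polynomial of the
third kind: multiplying by `sin θ`,
`(S_n − S_{n−1})(2 cos θ) · sin θ = sin((n+1)θ) − sin(nθ) = 2 sin(θ/2) cos((2n+1)θ/2)`.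
So the `n` distinct numbers `2 cos((2j−1)π/(2n+1))`, `1 ≤ j ≤ n`, are roots of this monic
polynomial of degree `n`, which is therefore their nodal polynomial. A sequence satisfying the
recurrence is the evaluation of the polynomials `S_k` at `v`.
-/

open Polynomial Polynomial.Chebyshev Real Finset

theorem Polynomial.Monic.eq_nodal {R ι : Type*} [CommRing R] [IsDomain R] {p : R[X]}
    (hp : p.Monic) {s : Finset ι} {v : ι → R} (hvs : Set.InjOn v s) (hdeg : p.natDegree = #s)
    (hroots : ∀ i ∈ s, p.eval (v i) = 0) : p = Lagrange.nodal s v := by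
  have hdeg' : p.degree = #s := by rw [degree_eq_natDegree hp.ne_zero, hdeg]
  refine eq_of_degree_le_of_eval_index_eq s hvs hdeg'.le ?_ ?_ ?_
  · rw [hdeg', Lagrange.degree_nodal]
  · rw [hp.leadingCoeff, Lagrange.nodal_monic.leadingCoeff]
  · intro i hi
    rw [hroots i hi, Lagrange.eval_nodal_at_node hi]

namespace Polynomial.Chebyshev

variable {R : Type*} [CommRing R]

theorem eq_eval_S_of_recurrence (x : R) (f : ℤ → R) (h0 : f 0 = 1) (h1 : f 1 = x)
    (hrec : ∀ k : ℤ, f (k + 1) = x * f k - f (k - 1)) (k : ℤ) : f k = (S R k).eval x := by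
  induction k using Chebyshev.induct with
  | zero => simp [h0]
  | one => simp [h1]
  | add_two n ih₁ ih₀ =>
    rw [show (n : ℤ) + 2 = n + 1 + 1 by ring, hrec, add_sub_cancel_right, ih₁, ih₀,
      S_add_one R (n + 1), add_sub_cancel_right]
    simp
  | neg_add_one n ih₀ ih₁ =>
    have h := hrec (-n)
    rw [S_sub_one, eval_sub, eval_mul, eval_X, ← ih₀, ← ih₁]
    linear_combination h

theorem monic_S_natCast_and_natDegree [Nontrivial R] (n : ℕ) :
    (S R n).Monic ∧ (S R n).natDegree = n := by
  induction n using Nat.twoStepInduction with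
  | zero => simp
  | one => simp
  | more n ih₀ ih₁ =>
    push_cast at ih₁
    have hX : (X * S R (n + 1)).natDegree = n + 2 := by
      rw [natDegree_X_mul ih₁.1.ne_zero, ih₁.2]
    have hlt : (S R n).natDegree < (X * S R (n + 1)).natDegree := by omega
    push_cast
    rw [S_add_two]
    exact ⟨(monic_X.mul ih₁.1).sub_of_left (degree_lt_degree hlt),
      by rw [natDegree_sub_eq_left_of_natDegree_lt hlt, hX]⟩

theorem monic_S_sub_S_sub_one_and_natDegree [Nontrivial R] (n : ℕ) :
    (S R n - S R (n - 1)).Monic ∧ (S R n - S R (n - 1)).natDegree = n := by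
  cases n with
  | zero => simp
  | succ m =>
    obtain ⟨hmonic, hdeg⟩ := monic_S_natCast_and_natDegree (R := R) (m + 1)
    push_cast at hmonic hdeg ⊢
    have hlt : (S R m).natDegree < (S R (m + 1)).natDegree := by
      rw [hdeg, (monic_S_natCast_and_natDegree m).2]; omega
    rw [add_sub_cancel_right]
    exact ⟨hmonic.sub_of_left (degree_lt_degree hlt),
      by rw [natDegree_sub_eq_left_of_natDegree_lt hlt, hdeg]⟩

theorem eval_S_sub_S_sub_one_two_mul_cos_mul_sin (n : ℤ) (θ : ℝ) :
    (S ℝ n - S ℝ (n - 1)).eval (2 * cos θ) * sin θ =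
      2 * sin (θ / 2) * cos ((2 * n + 1) * θ / 2) := by
  rw [eval_sub, sub_mul, S_two_mul_real_cos, S_two_mul_real_cos, sin_sub_sin]
  push_cast
  ring_nf

end Polynomial.Chebyshev

theorem odd_mul_pi_div_mem_Ioo {n j : ℕ} (hj : j ∈ Icc 1 n) :
    (2 * (j : ℝ) - 1) * π / (2 * n + 1) ∈ Set.Ioo 0 π := by
  rw [mem_Icc] at hj
  have h1 : (1 : ℝ) ≤ j := by exact_mod_cast hj.1
  have h2 : (j : ℝ) ≤ n := by exact_mod_cast hj.2
  constructor
  · exact div_pos (mul_pos (by linarith) pi_pos) (by positivity)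
  · rw [div_lt_iff₀ (by positivity)]
    nlinarith [pi_pos]

theorem injOn_two_mul_cos_odd_mul_pi_div (n : ℕ) :
    Set.InjOn (fun j : ℕ ↦ 2 * cos ((2 * (j : ℝ) - 1) * π / (2 * n + 1))) (Icc 1 n) := by
  intro a ha b hb hab
  have h := injOn_cos (Set.Ioo_subset_Icc_self (odd_mul_pi_div_mem_Ioo ha))
    (Set.Ioo_subset_Icc_self (odd_mul_pi_div_mem_Ioo hb)) (mul_left_cancel₀ two_ne_zero hab)
  rw [div_left_inj' (by positivity), mul_left_inj' pi_ne_zero] at h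
  exact_mod_cast (by linarith : (a : ℝ) = b)

theorem S_sub_S_sub_one_eq_nodal (n : ℕ) :
    S ℝ n - S ℝ (n - 1) = Lagrange.nodal (Icc 1 n)
      (fun j : ℕ ↦ 2 * cos ((2 * (j : ℝ) - 1) * π / (2 * n + 1))) := by
  obtain ⟨hmonic, hdeg⟩ := monic_S_sub_S_sub_one_and_natDegree (R := ℝ) n
  refine hmonic.eq_nodal (injOn_two_mul_cos_odd_mul_pi_div n) (by rw [hdeg, Nat.card_Icc]; omega) ?_
  intro j hj
  set θ := (2 * (j : ℝ) - 1) * π / (2 * n + 1)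
  obtain ⟨hθ₀, hθπ⟩ := odd_mul_pi_div_mem_Ioo hj
  have hsin : sin θ ≠ 0 := (sin_pos_of_pos_of_lt_pi hθ₀ hθπ).ne'
  have hcos : cos ((2 * (n : ℤ) + 1) * θ / 2) = 0 := by
    rw [cos_eq_zero_iff]
    refine ⟨j - 1, ?_⟩
    simp only [θ]
    field_simp
    push_cast
    ring
  have h := eval_S_sub_S_sub_one_two_mul_cos_mul_sin n θ
  rw [hcos, mul_zero] at h
  exact (mul_eq_zero.mp h).resolve_right hsin

theorem chebyshev_product_formula_even
    (v : ℂ) (S : ℤ → ℂ)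
    (h0 : S 0 = 1) (h1 : S 1 = v)
    (hrec : ∀ k : ℤ, S (k + 1) = v * S k - S (k - 1))
    (n : ℕ) :
    S n - S ((n : ℤ) - 1) = ∏ j ∈ Finset.Icc 1 n,
      (v - 2 * (Real.cos ((2 * (j : ℝ) - 1) * Real.pi / (2 * n + 1)) : ℂ)) := by
  have h := congrArg (aeval v) (S_sub_S_sub_one_eq_nodal n)
  rw [Lagrange.nodal_eq] at h
  simp only [map_sub, aeval_S, map_prod, aeval_X, Polynomial.aeval_C, Complex.coe_algebraMap,
    Complex.ofReal_mul, Complex.ofReal_ofNat] at h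
  rw [eq_eval_S_of_recurrence v S h0 h1 hrec, eq_eval_S_of_recurrence v S h0 h1 hrec, h]
end

section
/- Let s₁, s₂ ∈ ℂ be nonzero and u ∈ ℂ. Define A = [[s₁, 1], [0, s₁⁻¹]], B = [[s₂, 0], [u, s₂⁻¹]], C = B·A·B⁻¹·A⁻¹, D = A⁻¹·B⁻¹·A·B, and set x = s₁ + s₁⁻¹, y = s₂ + s₂⁻¹, z = u + s₁s₂ + s₁⁻¹s₂⁻¹, v = tr(C). Then C₂₂·D₂₁·s₁⁻¹ + C₂₁·D₂₁ + C₂₁·D₁₁·s₁ = u·(x·y − v·z) and D₂₁·s₁⁻¹ + C₂₁·s₁ = u·(x·y − 2z). -/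
set_option maxHeartbeats 1000000

theorem riley_coefficient_identities
    (s₁ s₂ u : ℂ) (hs₁ : s₁ ≠ 0) (hs₂ : s₂ ≠ 0)
    (A B C D : Matrix (Fin 2) (Fin 2) ℂ)
    (hA : A = !![s₁, 1; 0, s₁⁻¹]) (hB : B = !![s₂, 0; u, s₂⁻¹])
    (hC : C = B * A * B⁻¹ * A⁻¹) (hD : D = A⁻¹ * B⁻¹ * A * B)
    (x y z v : ℂ)
    (hx : x = s₁ + s₁⁻¹) (hy : y = s₂ + s₂⁻¹)
    (hz : z = u + s₁ * s₂ + s₁⁻¹ * s₂⁻¹)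
    (hv : v = Matrix.trace C) :
    C 1 1 * D 1 0 * s₁⁻¹ + C 1 0 * D 1 0 + C 1 0 * D 0 0 * s₁ = u * (x * y - v * z) ∧
    D 1 0 * s₁⁻¹ + C 1 0 * s₁ = u * (x * y - 2 * z) := by
  have h₁ : s₁ * s₁⁻¹ = 1 := mul_inv_cancel₀ hs₁
  have h₂ : s₂ * s₂⁻¹ = 1 := mul_inv_cancel₀ hs₂
  obtain ⟨t₁, ht₁⟩ : ∃ t, s₁⁻¹ = t := ⟨_, rfl⟩
  obtain ⟨t₂, ht₂⟩ : ∃ t, s₂⁻¹ = t := ⟨_, rfl⟩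
  rw [ht₁] at h₁ hA hx hz ⊢
  rw [ht₂] at h₂ hB hy hz
  have hAi : A⁻¹ = !![t₁, -1; 0, s₁] := by
    apply Matrix.inv_eq_right_inv
    rw [hA]
    ext i j
    fin_cases i <;> fin_cases j <;>
      simp [Matrix.mul_fin_two, Matrix.one_fin_two] <;>
      first
        | linear_combination h₁
        | linear_combination -h₁
        | ring1
  have hBi : B⁻¹ = !![t₂, 0; -u, s₂] := by
    apply Matrix.inv_eq_right_inv
    rw [hB]
    ext i j
    fin_cases i <;> fin_cases j <;>
      simp [Matrix.mul_fin_two, Matrix.one_fin_two] <;>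
      first
        | linear_combination h₂
        | linear_combination -h₂
        | ring1
  have hCval : C = !![1 - t₁ * s₂ * u, s₂ * u - s₁ + s₁ * s₂ ^ 2;
      t₂ * u - t₁ * u ^ 2 - t₁ ^ 2 * t₂ * u,
      1 + u ^ 2 + t₁ * t₂ * u - s₁ * t₂ * u + s₁ * s₂ * u] := by
    rw [hC, hAi, hBi, hA, hB]
    ext i j
    simp only [Matrix.mul_fin_two]
    fin_cases i <;> fin_cases j <;> simp
    · linear_combination (s₂ * t₂) * h₁ + h₂
    · linear_combination (-s₁) * h₂
    · linear_combination (t₂ * u) * h₁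
    · linear_combination (s₂ * t₂) * h₁ + h₂
  have hDval : D = !![1 + u ^ 2 + t₁ * t₂ * u - t₁ * s₂ * u + s₁ * s₂ * u,
      t₂ * u - t₁ + t₁ * t₂ ^ 2;
      s₂ * u - s₁ * u ^ 2 - s₁ ^ 2 * s₂ * u, 1 - s₁ * t₂ * u] := by
    rw [hD, hAi, hBi, hA, hB]
    ext i j
    simp only [Matrix.mul_fin_two]
    fin_cases i <;> fin_cases j <;> simp
    · linear_combination (s₂ * t₂) * h₁ + h₂
    · linear_combination (-t₁) * h₂
    · linear_combination (s₂ * u) * h₁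
    · linear_combination (s₂ * t₂) * h₁ + h₂
  subst hv hx hy hz
  rw [hCval, hDval]
  simp only [Matrix.trace_fin_two_of, Matrix.cons_val', Matrix.cons_val_zero,
    Matrix.cons_val_one, Matrix.head_cons, Matrix.head_fin_const, Matrix.empty_val',
    Matrix.cons_val_fin_one, Matrix.of_apply]
  constructor
  · linear_combination (-2 * u ^ 2 - u ^ 4 - s₂ * t₂ * u ^ 2 - t₁ * t₂ * u
      - 2 * t₁ * t₂ * u ^ 3 + t₁ * s₂ * u ^ 3 - t₁ ^ 2 * t₂ ^ 2 * u ^ 2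
      + t₁ ^ 2 * s₂ * t₂ * u ^ 2 + s₁ * t₂ * u ^ 3 - s₁ * s₂ * u
      - 2 * s₁ * s₂ * u ^ 3 - s₁ * t₁ * s₂ * t₂ * u ^ 2
      + s₁ ^ 2 * s₂ * t₂ * u ^ 2 - s₁ ^ 2 * s₂ ^ 2 * u ^ 2) * h₁
  · linear_combination (-2 * u ^ 2 - t₁ * t₂ * u - s₁ * s₂ * u) * h₁
end

section
/- Let s₁, s₂ ∈ ℂ be nonzero and u ∈ ℂ. Define A = [[s₁, 1], [0, s₁⁻¹]], B = [[s₂, 0], [u, s₂⁻¹]], C = B·A·B⁻¹·A⁻¹, D = A⁻¹·B⁻¹·A·B, and let v = tr(C). Let S : ℤ → ℂ satisfy S(0) = 1, S(1) = v, and S(k+1) = v·S(k) − S(k−1) for every integer k. Then for every natural number n, the (1,1) entry of the matrix Cⁿ·A·Dⁿ equals (C₁₂D₂₁s₁⁻¹ + C₁₁D₂₁ + C₁₁D₁₁s₁)·S(n−1)² + s₁·S(n−2)² − (D₂₁ + C₁₁s₁ + D₁₁s₁)·S(n−1)·S(n−2). -/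
/-!
Every `M ∈ SL₂` satisfies `M² = (tr M) M - 1` by Cayley–Hamilton, so by induction
`Mⁿ = S(n-1) M - S(n-2)` whenever `S` is the Chebyshev sequence at `tr M`. Both `C` and `D` lie in
`SL₂`, and `D⁻¹ = B⁻¹A⁻¹BA` is a cyclic rotation of `C = BAB⁻¹A⁻¹`, so `tr D = tr D⁻¹ = tr C = v`.
Hence `CⁿADⁿ = (S(n-1) C - S(n-2)) A (S(n-1) D - S(n-2))`, whose `(0,0)` entry expands to the
stated quadratic form in `S(n-1)` and `S(n-2)`.
-/

namespace Matrix

variable {R : Type*} [CommRing R]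

theorem sq_eq_trace_smul_sub_one_of_det_eq_one [Nontrivial R] {M : Matrix (Fin 2) (Fin 2) R}
    (h : M.det = 1) : M ^ 2 = M.trace • M - 1 := by
  have hCH := aeval_self_charpoly M
  rw [charpoly_fin_two, h] at hCH
  simp only [map_add, map_sub, map_pow, map_one,
    Polynomial.aeval_C, Polynomial.aeval_X, Polynomial.aeval_mul, Algebra.smul_def] at hCH ⊢
  rw [eq_sub_iff_add_eq, ← sub_eq_zero, ← hCH]
  abel

theorem trace_inv_of_det_eq_one {M : Matrix (Fin 2) (Fin 2) R} (h : M.det = 1) :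
    M⁻¹.trace = M.trace := by
  simp [inv_def, h, adjugate_fin_two, trace_fin_two, add_comm]

variable {n : Type*} [Fintype n] [DecidableEq n]

theorem det_commutator {A B : Matrix n n R} (hA : IsUnit A.det) (hB : IsUnit B.det) :
    (A * B * A⁻¹ * B⁻¹).det = 1 := by
  rw [det_mul, det_mul, det_mul, det_nonsing_inv, det_nonsing_inv, mul_right_comm A.det,
    Ring.mul_inverse_cancel _ hA, one_mul, Ring.mul_inverse_cancel _ hB]

theorem det_inv_mul_inv_mul_mul {A B : Matrix n n R} (hA : IsUnit A.det) (hB : IsUnit B.det) :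
    (A⁻¹ * B⁻¹ * A * B).det = 1 := by
  simpa only [nonsing_inv_nonsing_inv _ hA, nonsing_inv_nonsing_inv _ hB] using
    det_commutator (isUnit_nonsing_inv_det _ hA) (isUnit_nonsing_inv_det _ hB)

theorem trace_inv_mul_inv_mul_mul_eq_trace_commutator {A B : Matrix (Fin 2) (Fin 2) R}
    (hA : IsUnit A.det) (hB : IsUnit B.det) :
    (A⁻¹ * B⁻¹ * A * B).trace = (B * A * B⁻¹ * A⁻¹).trace := by
  rw [← trace_inv_of_det_eq_one (det_inv_mul_inv_mul_mul hA hB)]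
  simp only [mul_inv_rev, nonsing_inv_nonsing_inv _ hA, nonsing_inv_nonsing_inv _ hB]
  rw [← Matrix.mul_assoc, trace_mul_comm]
  simp only [Matrix.mul_assoc]

end Matrix

theorem pow_eq_smul_sub_smul_one_of_sq_eq {K A : Type*} [CommRing K] [Ring A] [Algebra K A]
    {v : K} {S : ℤ → K} (h0 : S 0 = 1) (h1 : S 1 = v)
    (hrec : ∀ k, S (k + 1) = v * S k - S (k - 1)) {M : A} (hM : M ^ 2 = v • M - 1) (n : ℕ) :
    M ^ n = S (n - 1) • M - S (n - 2) • 1 := by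
  have hS_neg_one : S (-1) = 0 := by
    have h := hrec 0
    norm_num [h0, h1] at h
    linear_combination h
  have hS_neg_two : S (-2) = -1 := by
    have h := hrec (-1)
    norm_num [h0, hS_neg_one] at h
    linear_combination h
  induction n with
  | zero => simp [hS_neg_one, hS_neg_two]
  | succ n ih =>
    have hSn : S n = v * S (n - 1) - S (n - 2) := by
      simpa [sub_add_cancel, sub_sub, one_add_one_eq_two] using hrec (n - 1)
    rw [pow_succ, ih, sub_mul, smul_mul_assoc, smul_mul_assoc, one_mul, ← sq, hM]
    push_cast
    rw [add_sub_cancel_right, show (n : ℤ) + 1 - 2 = n - 1 by ring, hSn]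
    module

theorem w11_formula_odd_twisted_whitehead
    (s₁ s₂ u : ℂ) (hs₁ : s₁ ≠ 0) (hs₂ : s₂ ≠ 0)
    (A B C D : Matrix (Fin 2) (Fin 2) ℂ)
    (hA : A = !![s₁, 1; 0, s₁⁻¹]) (hB : B = !![s₂, 0; u, s₂⁻¹])
    (hC : C = B * A * B⁻¹ * A⁻¹) (hD : D = A⁻¹ * B⁻¹ * A * B)
    (v : ℂ) (hv : v = Matrix.trace C)
    (S : ℤ → ℂ)
    (h0 : S 0 = 1) (h1 : S 1 = v)
    (hrec : ∀ k : ℤ, S (k + 1) = v * S k - S (k - 1)) :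
    ∀ n : ℕ, (C ^ n * A * D ^ n) 0 0
      = (C 0 1 * D 1 0 * s₁⁻¹ + C 0 0 * D 1 0 + C 0 0 * D 0 0 * s₁) * S ((n : ℤ) - 1) ^ 2
        + s₁ * S ((n : ℤ) - 2) ^ 2
        - (D 1 0 + C 0 0 * s₁ + D 0 0 * s₁) * S ((n : ℤ) - 1) * S ((n : ℤ) - 2) := by
  have hdetA : IsUnit A.det := by simp [hA, Matrix.det_fin_two_of, hs₁]
  have hdetB : IsUnit B.det := by simp [hB, Matrix.det_fin_two_of, hs₂]
  have hC_sq : C ^ 2 = v • C - 1 := by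
    rw [hv]
    exact Matrix.sq_eq_trace_smul_sub_one_of_det_eq_one (hC ▸ Matrix.det_commutator hdetB hdetA)
  have hD_sq : D ^ 2 = v • D - 1 := by
    rw [hv, hC, ← Matrix.trace_inv_mul_inv_mul_mul_eq_trace_commutator hdetA hdetB, ← hD]
    exact Matrix.sq_eq_trace_smul_sub_one_of_det_eq_one
      (hD ▸ Matrix.det_inv_mul_inv_mul_mul hdetA hdetB)
  intro n
  rw [pow_eq_smul_sub_smul_one_of_sq_eq h0 h1 hrec hC_sq,
    pow_eq_smul_sub_smul_one_of_sq_eq h0 h1 hrec hD_sq, hA]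
  simp only [Fin.isValue, Matrix.mul_apply, Matrix.sub_apply, Matrix.smul_apply, smul_eq_mul,
    Matrix.one_apply, mul_ite, mul_one, mul_zero, Matrix.of_apply, Matrix.cons_val',
    Matrix.cons_val_fin_one, Fin.sum_univ_two, ↓reduceIte, Matrix.cons_val_zero, zero_ne_one,
    sub_zero, Matrix.cons_val_one, add_zero, one_ne_zero]
  ring
end

section
/- Let s₁, s₂ ∈ ℂ be nonzero and u ∈ ℂ. Define A = [[s₁, 1], [0, s₁⁻¹]], B = [[s₂, 0], [u, s₂⁻¹]], C = B·A·B⁻¹·A⁻¹, D = A⁻¹·B⁻¹·A·B, and set x = s₁ + s₁⁻¹, y = s₂ + s₂⁻¹, z = u + s₁s₂ + s₁⁻¹s₂⁻¹, v = tr(C). Let S : ℤ → ℂ satisfy S(0) = 1, S(1) = v, and S(k+1) = v·S(k) − S(k−1) for every integer k. Then for every natural number n, the (2,1) entry of the matrix Cⁿ·A·Dⁿ equals u · S(n−1) · ( (x·y − v·z)·S(n−1) − (x·y − 2z)·S(n−2) ). (This realizes the Riley polynomial of the twisted Whitehead link W_{2n−1}, whose link group is ⟨a, b | aw = wa⟩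 with w = (bab⁻¹a⁻¹)ⁿ a (a⁻¹b⁻¹ab)ⁿ.) -/
open Matrix

lemma sl2_pow_aux (M : Matrix (Fin 2) (Fin 2) ℂ) (v : ℂ)
    (htr : M.trace = v) (hdet : M.det = 1)
    (S : ℤ → ℂ) (h0 : S 0 = 1) (h1 : S 1 = v)
    (hrec : ∀ k : ℤ, S (k + 1) = v * S k - S (k - 1)) :
    ∀ n : ℕ, M ^ n = S ((n : ℤ) - 1) • M - S ((n : ℤ) - 2) • (1 : Matrix (Fin 2) (Fin 2) ℂ) := by
  have hm1 : S (-1) = 0 := by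
    have h := hrec 0
    simp [h0, h1] at h
    linear_combination h
  have hm2 : S (-2) = -1 := by
    have h := hrec (-1)
    norm_num [h0, hm1] at h
    linear_combination h
  have hCH : M * M = v • M - 1 := by
    rw [Matrix.trace_fin_two] at htr
    rw [Matrix.det_fin_two] at hdet
    ext i j
    fin_cases i <;> fin_cases j <;>
      simp [Matrix.mul_apply, Fin.sum_univ_two, Matrix.one_apply] <;>
      first
        | linear_combination (M 0 0) * htr - hdet
        | linear_combination (M 1 1) * htr - hdet
        | linear_combination (M 0 1) * htr
        | linear_combination (M 1 0) * htr
  intro n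
  induction n with
  | zero => norm_num [hm1, hm2]
  | succ n ih =>
      have i1 : ((n : ℤ) + 1) - 1 = (n : ℤ) := by ring
      have i2 : ((n : ℤ) + 1) - 2 = (n : ℤ) - 1 := by ring
      have hSn : S (n : ℤ) = v * S ((n : ℤ) - 1) - S ((n : ℤ) - 2) := by
        have h := hrec ((n : ℤ) - 1)
        norm_num at h
        convert h using 3 <;> ring
      push_cast
      rw [i1, i2, pow_succ, ih, sub_mul, smul_mul_assoc, smul_mul_assoc, one_mul, hCH, hSn]
      module

set_option maxHeartbeats 1000000 in
theorem riley_polynomial_odd_twisted_whitehead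
    (s₁ s₂ u : ℂ) (hs₁ : s₁ ≠ 0) (hs₂ : s₂ ≠ 0)
    (A B C D : Matrix (Fin 2) (Fin 2) ℂ)
    (hA : A = !![s₁, 1; 0, s₁⁻¹]) (hB : B = !![s₂, 0; u, s₂⁻¹])
    (hC : C = B * A * B⁻¹ * A⁻¹) (hD : D = A⁻¹ * B⁻¹ * A * B)
    (x y z v : ℂ)
    (hx : x = s₁ + s₁⁻¹) (hy : y = s₂ + s₂⁻¹)
    (hz : z = u + s₁ * s₂ + s₁⁻¹ * s₂⁻¹)
    (hv : v = Matrix.trace C)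
    (S : ℤ → ℂ)
    (h0 : S 0 = 1) (h1 : S 1 = v)
    (hrec : ∀ k : ℤ, S (k + 1) = v * S k - S (k - 1)) :
    ∀ n : ℕ, (C ^ n * A * D ^ n) 1 0
      = u * S ((n : ℤ) - 1)
        * ((x * y - v * z) * S ((n : ℤ) - 1) - (x * y - 2 * z) * S ((n : ℤ) - 2)) := by
  have e₁ : s₁ * s₁⁻¹ = 1 := mul_inv_cancel₀ hs₁
  have e₂ : s₂ * s₂⁻¹ = 1 := mul_inv_cancel₀ hs₂
  have hAi : A⁻¹ = !![s₁⁻¹, -1; 0, s₁] := by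
    rw [hA]
    apply Matrix.inv_eq_right_inv
    ext i j
    fin_cases i <;> fin_cases j <;>
      simp [Matrix.mul_apply, Fin.sum_univ_two, Matrix.one_apply] <;>
      first
        | linear_combination e₁
        | ring
  have hBi : B⁻¹ = !![s₂⁻¹, 0; -u, s₂] := by
    rw [hB]
    apply Matrix.inv_eq_right_inv
    ext i j
    fin_cases i <;> fin_cases j <;>
      simp [Matrix.mul_apply, Fin.sum_univ_two, Matrix.one_apply] <;>
      first
        | linear_combination e₂
        | linear_combination (-u) * e₂
        | ring
  have hCm : C = !![1 - u*s₂*s₁⁻¹, -s₁ + u*s₂ + s₁*s₂^2;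
      u*s₂⁻¹ - u^2*s₁⁻¹ - u*s₁⁻¹*s₁⁻¹*s₂⁻¹, 1 + u^2 + u*s₁*s₂ + u*s₁⁻¹*s₂⁻¹ - u*s₁*s₂⁻¹] := by
    rw [hC, hAi, hBi, hA, hB]
    ext i j
    fin_cases i <;> fin_cases j <;>
      simp [Matrix.mul_apply, Fin.sum_univ_two] <;>
      first
        | linear_combination (s₂*s₂⁻¹) * e₁ + e₂
        | linear_combination (-s₁) * e₂
        | linear_combination (s₂⁻¹*u) * e₁
        | ring
  have hDm : D = !![1 + u*s₁⁻¹*s₂⁻¹ + u*s₁*s₂ + u^2 - u*s₂*s₁⁻¹, s₁⁻¹*s₂⁻¹*s₂⁻¹ + u*s₂⁻¹ - s₁⁻¹;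
      -u*s₁^2*s₂ - u^2*s₁ + u*s₂, 1 - u*s₁*s₂⁻¹] := by
    rw [hD, hAi, hBi, hA, hB]
    ext i j
    fin_cases i <;> fin_cases j <;>
      simp [Matrix.mul_apply, Fin.sum_univ_two] <;>
      first
        | linear_combination (s₂*s₂⁻¹) * e₁ + e₂
        | linear_combination (-s₁⁻¹) * e₂
        | linear_combination (s₂*u) * e₁
        | ring
  have hdetC : C.det = 1 := by
    rw [hCm, Matrix.det_fin_two_of]
    linear_combination (-u^2 - s₁⁻¹*s₂⁻¹*u + s₂*s₂⁻¹*u^2 + s₂^2*s₁⁻¹*s₂⁻¹*u) * e₁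
      + (s₂*s₁⁻¹*u - s₁*s₂*u) * e₂
  have hdetD : D.det = 1 := by
    rw [hDm, Matrix.det_fin_two_of]
    linear_combination (-u^2 + s₂*s₂⁻¹*u^2 - s₁*s₂*u + s₁*s₂*s₂⁻¹^2*u) * e₁
      + (-s₁⁻¹*s₂⁻¹*u + s₁*s₂⁻¹*u) * e₂
  have htrD : D.trace = v := by
    rw [hv, hCm, hDm, Matrix.trace_fin_two_of, Matrix.trace_fin_two_of]; ring
  have hpC := sl2_pow_aux C v hv.symm hdetC S h0 h1 hrec
  have hpD := sl2_pow_aux D v htrD hdetD S h0 h1 hrec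
  have f3 : A 1 0 = 0 := by rw [hA]; simp
  have hCAm : C * A = !![s₁ - u*s₂, s₂^2;
      u*s₁*s₂⁻¹ - u^2 - u*s₁⁻¹*s₂⁻¹, s₁⁻¹ + u*s₂] := by
    rw [hCm, hA]
    ext i j
    fin_cases i <;> fin_cases j <;>
      simp [Matrix.mul_apply, Fin.sum_univ_two] <;>
      first
        | linear_combination (-s₂*u) * e₁
        | linear_combination (-1 + s₂^2) * e₁
        | linear_combination (-u^2 - s₁⁻¹*s₂⁻¹*u) * e₁
        | linear_combination (-s₂⁻¹*u + s₂*u) * e₁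
        | ring
  have hADm : A * D = !![s₁ + u*s₂⁻¹, s₂⁻¹^2;
      -u*s₁*s₂ - u^2 + u*s₂*s₁⁻¹, s₁⁻¹ - u*s₂⁻¹] := by
    rw [hDm, hA]
    ext i j
    fin_cases i <;> fin_cases j <;>
      simp [Matrix.mul_apply, Fin.sum_univ_two] <;>
      first
        | linear_combination (s₂⁻¹*u - s₂*u) * e₁
        | linear_combination (-1 + s₂⁻¹^2) * e₁
        | linear_combination (-u^2 - s₁*s₂*u) * e₁
        | linear_combination (-s₂⁻¹*u) * e₁
        | ring
  have f1 : (C * A * D) 1 0 = u * (x * y - v * z) := by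
    rw [hv, hCAm, hDm, hCm, hx, hy, hz, Matrix.trace_fin_two_of]
    simp [Matrix.mul_apply, Fin.sum_univ_two]
    linear_combination (-u^2 - s₂^2*u^2 - s₁*s₂*u) * e₁
  have f2 : (C * A) 1 0 + (A * D) 1 0 = u * (x * y - 2 * z) := by
    rw [hCAm, hADm, hx, hy, hz]
    simp
    ring
  intro n
  rw [hpC n, hpD n]
  set a := S ((n : ℤ) - 1) with ha
  set b := S ((n : ℤ) - 2) with hb
  have expand : (a • C - b • 1) * A * (a • D - b • 1)
      = (a * a) • (C * A * D) - (a * b) • (C * A) - (a * b) • (A * D) + (b * b) • A := by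
    simp only [sub_mul, mul_sub, smul_mul_assoc, mul_smul_comm, one_mul, mul_one,
      smul_smul]
    abel_nf
    module
  rw [expand]
  simp only [Matrix.add_apply, Matrix.sub_apply, Matrix.smul_apply, smul_eq_mul, f1, f3]
  linear_combination (-(a * b)) * f2
end

section
/- Let s₁, s₂ ∈ ℂ be nonzero and u ∈ ℂ. Define A = [[s₁, 1], [0, s₁⁻¹]], B = [[s₂, 0], [u, s₂⁻¹]], C = B·A·B⁻¹·A⁻¹, D = A⁻¹·B⁻¹·A·B, and set x = s₁ + s₁⁻¹, y = s₂ + s₂⁻¹, z = u + s₁s₂ + s₁⁻¹s₂⁻¹, v = tr(C). Let S : ℤ → ℂ satisfy S(0) = 1, S(1) = v, and S(k+1) = v·S(k) − S(k−1) for every integer k. Then for every natural number n, the (2,1) entry of the matrix Cⁿ·(B·A·B)·Dⁿ equals u · ( S(n) − S(n−1) ) · ( z·S(n) − (x·y − z)·S(n−1) ). (This realizes the Riley polynomial of the twisted Whitehead link W_{2n}, whose link group is ⟨a, b | aw = wa⟩ with w = (bab⁻¹a⁻¹)ⁿ bab (a⁻¹b⁻¹ab)ⁿ.) -/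
/-!
The commutators `C = [B, A]` and `D = [A⁻¹, B⁻¹]` lie in `SL₂` and have the same trace `v`
(`D` is conjugate to `C⁻¹` by `AB`), so by Cayley–Hamilton both satisfy `M² = v M - 1`, whence
`Mⁿ = S_{n-1}(v) M - S_{n-2}(v)` with `S` the rescaled Chebyshev polynomials. The `(2,1)` entry of
`Cⁿ (BAB) Dⁿ` is therefore a quadratic form in `S_{n-1}(v)`, `S_{n-2}(v)`, and a direct
computation with the explicit matrices shows that it factors as claimed once
`S_n(v) = v S_{n-1}(v) - S_{n-2}(v)` is substituted.
-/

open Matrix Polynomial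

namespace Matrix

variable {R : Type*} [CommRing R]

theorem inv_fin_two_of_det_eq_one {a b c d : R} (h : a * d - b * c = 1) :
    !![a, b; c, d]⁻¹ = !![d, -b; -c, a] := by
  rw [inv_def, det_fin_two_of, h, Ring.inverse_one, one_smul, adjugate_fin_two_of]

theorem sq_eq_trace_smul_sub_det_smul_one_fin_two [Nontrivial R] (M : Matrix (Fin 2) (Fin 2) R) :
    M ^ 2 = M.trace • M - M.det • 1 := by
  have h := M.aeval_self_charpoly
  rw [charpoly_fin_two] at h
  simp only [map_add, map_sub, map_pow, aeval_X, aeval_C, map_mul,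
    Algebra.algebraMap_eq_smul_one, smul_mul_assoc, one_mul] at h
  rw [← sub_eq_zero, ← h]
  abel

end Matrix

namespace Polynomial.Chebyshev

variable {R : Type*} [CommRing R]

theorem eq_S_eval_of_rec {t : R} {f : ℤ → R} (h0 : f 0 = 1) (h1 : f 1 = t)
    (hrec : ∀ k, f (k + 1) = t * f k - f (k - 1)) (k : ℤ) : f k = (S R k).eval t := by
  induction k using Polynomial.Chebyshev.induct with
  | zero => simp [h0]
  | one => simp [h1]
  | add_two n h₁ h₀ =>
    rw [S_add_two, eval_sub, eval_mul, eval_X, ← h₁, ← h₀]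
    simpa [add_assoc, one_add_one_eq_two] using hrec (n + 1)
  | neg_add_one n h₀ h₁ =>
    rw [S_sub_one, eval_sub, eval_mul, eval_X, ← h₀, ← h₁]
    linear_combination hrec (-n)

theorem pow_eq_S_eval_smul_sub {A : Type*} [Ring A] [Algebra R A] {m : A} {t : R}
    (h : m ^ 2 = t • m - 1) (n : ℕ) :
    m ^ n = (S R (n - 1)).eval t • m - (S R (n - 2)).eval t • 1 := by
  induction n with
  | zero => simp
  | succ n ih =>
    have e₁ : ((n + 1 : ℕ) : ℤ) - 1 = n := by push_cast; ring
    have e₂ : ((n + 1 : ℕ) : ℤ) - 2 = n - 1 := by push_cast; ring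
    rw [pow_succ, ih, sub_mul, smul_mul_assoc, ← sq, h, smul_mul_assoc, one_mul, e₁, e₂,
      S_eq R n, eval_sub, eval_mul, eval_X]
    module

end Polynomial.Chebyshev

namespace RileyRepresentation

variable {K : Type*} [Field K] {s₁ s₂ u : K}

theorem inv_upper (hs₁ : s₁ ≠ 0) : !![s₁, 1; 0, s₁⁻¹]⁻¹ = !![s₁⁻¹, -1; 0, s₁] := by
  simpa using inv_fin_two_of_det_eq_one (by simp [hs₁] : s₁ * s₁⁻¹ - 1 * 0 = 1)

theorem inv_lower (hs₂ : s₂ ≠ 0) : !![s₂, 0; u, s₂⁻¹]⁻¹ = !![s₂⁻¹, 0; -u, s₂] := by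
  simpa using inv_fin_two_of_det_eq_one (by simp [hs₂] : s₂ * s₂⁻¹ - 0 * u = 1)

theorem trace_commutator_eq (hs₁ : s₁ ≠ 0) (hs₂ : s₂ ≠ 0) {A B : Matrix (Fin 2) (Fin 2) K}
    (hA : A = !![s₁, 1; 0, s₁⁻¹]) (hB : B = !![s₂, 0; u, s₂⁻¹]) :
    (A⁻¹ * B⁻¹ * A * B).trace = (B * A * B⁻¹ * A⁻¹).trace := by
  subst hA hB
  rw [inv_upper hs₁, inv_lower hs₂]
  simp only [mul_fin_two, trace_fin_two_of]
  ring

-- For `a = S_{n-1}(v)` and `b = S_{n-2}(v)` the outer factors are `Cⁿ` and `Dⁿ`,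
-- and `C.trace * a - b = S_n(v)`.
theorem chebyshev_word_apply_one_zero (hs₁ : s₁ ≠ 0) (hs₂ : s₂ ≠ 0)
    {A B C D : Matrix (Fin 2) (Fin 2) K}
    (hA : A = !![s₁, 1; 0, s₁⁻¹]) (hB : B = !![s₂, 0; u, s₂⁻¹])
    (hC : C = B * A * B⁻¹ * A⁻¹) (hD : D = A⁻¹ * B⁻¹ * A * B) {x y z : K}
    (hx : x = s₁ + s₁⁻¹) (hy : y = s₂ + s₂⁻¹) (hz : z = u + s₁ * s₂ + s₁⁻¹ * s₂⁻¹) (a b : K) :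
    ((a • C - b • 1) * (B * A * B) * (a • D - b • 1)) 1 0
      = u * ((C.trace * a - b) - a) * (z * (C.trace * a - b) - (x * y - z) * a) := by
  subst hA hB hC hD hx hy hz
  rw [inv_upper hs₁, inv_lower hs₂, one_fin_two]
  simp only [mul_fin_two, smul_of, smul_cons, smul_empty, smul_eq_mul, of_sub_of, cons_sub_cons,
    empty_sub_empty, trace_fin_two_of, of_apply, cons_val_one, cons_val_zero]
  field_simp
  ring

end RileyRepresentation

theorem riley_polynomial_even_twisted_whitehead
    (s₁ s₂ u : ℂ) (hs₁ : s₁ ≠ 0) (hs₂ : s₂ ≠ 0)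
    (A B C D : Matrix (Fin 2) (Fin 2) ℂ)
    (hA : A = !![s₁, 1; 0, s₁⁻¹]) (hB : B = !![s₂, 0; u, s₂⁻¹])
    (hC : C = B * A * B⁻¹ * A⁻¹) (hD : D = A⁻¹ * B⁻¹ * A * B)
    (x y z v : ℂ)
    (hx : x = s₁ + s₁⁻¹) (hy : y = s₂ + s₂⁻¹)
    (hz : z = u + s₁ * s₂ + s₁⁻¹ * s₂⁻¹)
    (hv : v = Matrix.trace C)
    (S : ℤ → ℂ)
    (h0 : S 0 = 1) (h1 : S 1 = v)
    (hrec : ∀ k : ℤ, S (k + 1) = v * S k - S (k - 1)) :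
    ∀ n : ℕ, (C ^ n * (B * A * B) * D ^ n) 1 0
      = u * (S n - S ((n : ℤ) - 1))
        * (z * S n - (x * y - z) * S ((n : ℤ) - 1)) := by
  have hdetA : A.det = 1 := by simp [hA, hs₁]
  have hdetB : B.det = 1 := by simp [hB, hs₂]
  have hC2 : C ^ 2 = v • C - 1 := by
    rw [sq_eq_trace_smul_sub_det_smul_one_fin_two, ← hv, hC]
    simp [det_mul, det_nonsing_inv, hdetA, hdetB]
  have hD2 : D ^ 2 = v • D - 1 := by
    rw [sq_eq_trace_smul_sub_det_smul_one_fin_two, hv, hC, hD,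
      RileyRepresentation.trace_commutator_eq hs₁ hs₂ hA hB]
    simp [det_mul, det_nonsing_inv, hdetA, hdetB]
  have hS := Polynomial.Chebyshev.eq_S_eval_of_rec h0 h1 hrec
  intro n
  have hSn : S n = v * S (n - 1) - S (n - 2) := by simpa [sub_sub] using hrec (n - 1)
  rw [Polynomial.Chebyshev.pow_eq_S_eval_smul_sub hC2,
    Polynomial.Chebyshev.pow_eq_S_eval_smul_sub hD2, ← hS, ← hS,
    RileyRepresentation.chebyshev_word_apply_one_zero hs₁ hs₂ hA hB hC hD hx hy hz, ← hv, hSn]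
end

section
/- Let x, t ∈ ℂ, set v = 2 + t², and let S : ℤ → ℂ satisfy S(0) = 1, S(1) = v, and S(k+1) = v·S(k) − S(k−1) for every integer k. Then for every natural number n ≥ 1, x·t·S(n−1) + S(n) − S(n−2) = Σ_{i=0}^{n} ( C(n+1+i, 2i+1) − C(n−1+i, 2i+1) )·t^{2i} + x · Σ_{i=0}^{n−1} C(n+i, 2i+1)·t^{2i+1}, where C(·,·) denotes the binomial coefficient. (This is the identity expressing the factor F(M,L) of the A-polynomial of the twisted Whitehead link W_{2n−1} after the substitution t = (M − M⁻¹)(L−1)/(L+1).) -/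
open Finset

theorem A_polynomial_factor_F_odd
    (x t v : ℂ) (hv : v = 2 + t ^ 2)
    (S : ℤ → ℂ)
    (h0 : S 0 = 1) (h1 : S 1 = v)
    (hrec : ∀ k : ℤ, S (k + 1) = v * S k - S (k - 1)) :
    ∀ n : ℕ, 1 ≤ n →
      x * t * S ((n : ℤ) - 1) + S n - S ((n : ℤ) - 2)
        = (∑ i ∈ Finset.range (n + 1),
            ((Nat.choose (n + 1 + i) (2 * i + 1) : ℂ)
              - (Nat.choose (n - 1 + i) (2 * i + 1) : ℂ)) * t ^ (2 * i))
          + x * ∑ i ∈ Finset.range n,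
              (Nat.choose (n + i) (2 * i + 1) : ℂ) * t ^ (2 * i + 1) := by
  have keyN : ∀ m k : ℕ, Nat.choose (m+2) (k+2) + Nat.choose m (k+2)
      = 2 * Nat.choose (m+1) (k+2) + Nat.choose m k := by
    intro m k
    have e1 : Nat.choose (m+2) (k+2) = Nat.choose (m+1) (k+1) + Nat.choose (m+1) (k+2) :=
      Nat.choose_succ_succ _ _
    have e2 : Nat.choose (m+1) (k+1) = Nat.choose m k + Nat.choose m (k+1) :=
      Nat.choose_succ_succ _ _
    have e3 : Nat.choose (m+1) (k+2) = Nat.choose m (k+1) + Nat.choose m (k+2) :=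
      Nat.choose_succ_succ _ _
    omega
  have formula : ∀ n : ℕ, S n = ∑ i ∈ Finset.range (n+1),
      (Nat.choose (n+1+i) (2*i+1) : ℂ) * t ^ (2*i) := by
    intro n
    induction n using Nat.twoStepInduction with
    | zero => simp [h0]
    | one =>
      simp only [Nat.cast_one]
      rw [h1, hv]
      norm_num [Finset.sum_range_succ]
      try ring
    | more m ih0 ih1 =>
      have hr := hrec ((m:ℤ)+1)
      have c1 : ((m:ℤ)+1+1) = ((m+2:ℕ):ℤ) := by push_cast; ring
      have c3 : ((m:ℤ)+1-1) = (m:ℤ) := by ring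
      have c2 : ((m:ℤ)+1) = ((m+1:ℕ):ℤ) := by push_cast; ring
      rw [c1, c3, c2] at hr
      rw [hr, ih0, ih1, hv]
      -- now a pure sum identity
      set f3 : ℕ → ℂ := fun i => (Nat.choose (m+2+1+i) (2*i+1) : ℂ) * t ^ (2*i) with hf3def
      set f2 : ℕ → ℂ := fun i => (Nat.choose (m+1+1+i) (2*i+1) : ℂ) * t ^ (2*i) with hf2def
      set f1 : ℕ → ℂ := fun i => (Nat.choose (m+1+i) (2*i+1) : ℂ) * t ^ (2*i) with hf1def
      have hL : ∑ i ∈ range (m+2+1), f3 i = (∑ i ∈ range (m+2), f3 (i+1)) + f3 0 :=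
        Finset.sum_range_succ' f3 (m+2)
      have h2a : ∑ i ∈ range (m+1+1), f2 i = (∑ i ∈ range (m+1), f2 (i+1)) + f2 0 :=
        Finset.sum_range_succ' f2 (m+1)
      have h2b : ∑ i ∈ range (m+2), f2 (i+1) = ∑ i ∈ range (m+1), f2 (i+1) := by
        rw [Finset.sum_range_succ, hf2def]
        simp only
        rw [Nat.choose_eq_zero_of_lt (by omega)]
        simp
      have h2c : t^2 * ∑ i ∈ range (m+1+1), f2 i
          = ∑ i ∈ range (m+2), (Nat.choose (m+1+1+i) (2*i+1) : ℂ) * t ^ (2*i+2) := by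
        rw [Finset.mul_sum]
        apply Finset.sum_congr rfl
        intro i _
        simp only [hf2def]
        ring
      have h1a : ∑ i ∈ range (m+1), f1 i = (∑ i ∈ range m, f1 (i+1)) + f1 0 :=
        Finset.sum_range_succ' f1 m
      have h1b : ∑ i ∈ range (m+2), f1 (i+1) = ∑ i ∈ range m, f1 (i+1) := by
        rw [Finset.sum_range_succ, Finset.sum_range_succ, hf1def]
        simp only
        rw [Nat.choose_eq_zero_of_lt (by omega), Nat.choose_eq_zero_of_lt (by omega)]
        simp
      have hmain : (∑ i ∈ range (m+2), f3 (i+1)) + ∑ i ∈ range (m+2), f1 (i+1)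
          = 2 * (∑ i ∈ range (m+2), f2 (i+1))
            + ∑ i ∈ range (m+2), (Nat.choose (m+1+1+i) (2*i+1) : ℂ) * t ^ (2*i+2) := by
        rw [Finset.mul_sum, ← Finset.sum_add_distrib, ← Finset.sum_add_distrib]
        apply Finset.sum_congr rfl
        intro i _
        simp only [hf3def, hf2def, hf1def]
        have hc := keyN (m+2+i) (2*i+1)
        have e1 : m+2+1+(i+1) = m+2+i+2 := by omega
        have e2 : m+1+(i+1) = m+2+i := by omega
        have e3 : m+1+1+(i+1) = m+2+i+1 := by omega
        have e4 : m+1+1+i = m+2+i := by omega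
        have e5 : 2*(i+1)+1 = 2*i+1+2 := by omega
        rw [e1, e2, e3, e4, e5]
        have hc' : (Nat.choose (m+2+i+2) (2*i+1+2) : ℂ) + Nat.choose (m+2+i) (2*i+1+2)
            = 2 * Nat.choose (m+2+i+1) (2*i+1+2) + Nat.choose (m+2+i) (2*i+1) := by
          exact_mod_cast hc
        linear_combination t^(2*(i+1)) * hc'
      have hv3 : f3 0 = (m:ℂ)+3 := by simp [hf3def, Nat.choose_one_right] <;> push_cast <;> ring
      have hv2 : f2 0 = (m:ℂ)+2 := by simp [hf2def, Nat.choose_one_right] <;> push_cast <;> ring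
      have hv1 : f1 0 = (m:ℂ)+1 := by simp [hf1def, Nat.choose_one_right] <;> push_cast <;> ring
      linear_combination -(hL + hmain - 2*h2a + 2*h2b - h2c + h1a - h1b + hv3 - 2*hv2 + hv1)
  have hSneg : S (-1) = 0 := by
    have h := hrec 0
    norm_num [h0, h1] at h
    linear_combination h
  intro n hn
  obtain ⟨m, rfl⟩ : ∃ m, n = m + 1 := ⟨n - 1, by omega⟩
  simp only [Nat.add_sub_cancel]
  have cast1 : ((m+1:ℕ):ℤ) - 1 = (m:ℤ) := by push_cast; ring
  have cast2 : ((m+1:ℕ):ℤ) - 2 = (m:ℤ) - 1 := by push_cast; ring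
  rw [cast1, cast2]
  have hXT : t * S (m:ℤ) = ∑ i ∈ range (m+1), (Nat.choose (m+1+i) (2*i+1) : ℂ) * t ^ (2*i+1) := by
    rw [formula m, Finset.mul_sum]
    apply Finset.sum_congr rfl
    intro i _
    ring
  have hC : S ((m:ℤ) - 1) = ∑ i ∈ range (m+1+1), (Nat.choose (m+i) (2*i+1) : ℂ) * t ^ (2*i) := by
    rcases m with _ | k
    · simp [hSneg, Finset.sum_range_succ, show Nat.choose 1 3 = 0 from by decide]
    · have c : ((k+1:ℕ):ℤ) - 1 = ((k:ℕ):ℤ) := by push_cast; ring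
      rw [c, formula k]
      symm
      rw [Finset.sum_range_succ, Finset.sum_range_succ]
      rw [Nat.choose_eq_zero_of_lt (by omega), Nat.choose_eq_zero_of_lt (by omega)]
      simp
  rw [formula (m+1), hC]
  simp only [sub_mul, Finset.sum_sub_distrib]
  rw [mul_assoc, hXT]
  ring
end

section
/- Let x, t ∈ ℂ, set v = 2 + t², and let S : ℤ → ℂ satisfy S(0) = 1, S(1) = v, and S(k+1) = v·S(k) − S(k−1) for every integer k. Then for every natural number n, (x + t)·S(n) − (x − t)·S(n−1) = Σ_{i=0}^{n} ( C(n+1+i, 2i+1) + C(n+i, 2i+1) )·t^{2i+1} + x · Σ_{i=0}^{n} C(n+i, 2i)·t^{2i}, where C(·,·) denotes the binomial coefficient. (This is the identity expressing the factor G(M,L) of the A-polynomial of the twisted Whitehead link W_{2n} after the substitution t = (M − M⁻¹)(LM²−1)/(LM²+1).) -/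
open Finset in
private theorem sumrec (t : ℂ) (n : ℕ) :
    ∑ i ∈ range (n+3), (Nat.choose (n+3+i) (2*i+1) : ℂ) * t^(2*i)
      = (2+t^2) * ∑ i ∈ range (n+2), (Nat.choose (n+2+i) (2*i+1) : ℂ) * t^(2*i)
        - ∑ i ∈ range (n+1), (Nat.choose (n+1+i) (2*i+1) : ℂ) * t^(2*i) := by
  have e2 : ∑ i ∈ range (n+2), (Nat.choose (n+2+i) (2*i+1) : ℂ) * t^(2*i)
      = ∑ i ∈ range (n+3), (Nat.choose (n+2+i) (2*i+1) : ℂ) * t^(2*i) := by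
    refine Finset.sum_subset (Finset.range_subset_range.mpr (by omega)) fun i _ hi => ?_
    simp only [Finset.mem_range, not_lt] at hi
    rw [Nat.choose_eq_zero_of_lt (by omega)]
    simp
  have e1 : ∑ i ∈ range (n+1), (Nat.choose (n+1+i) (2*i+1) : ℂ) * t^(2*i)
      = ∑ i ∈ range (n+3), (Nat.choose (n+1+i) (2*i+1) : ℂ) * t^(2*i) := by
    refine Finset.sum_subset (Finset.range_subset_range.mpr (by omega)) fun i _ hi => ?_
    simp only [Finset.mem_range, not_lt] at hi
    rw [Nat.choose_eq_zero_of_lt (by omega)]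
    simp
  have e3 : t^2 * ∑ i ∈ range (n+2), (Nat.choose (n+2+i) (2*i+1) : ℂ) * t^(2*i)
      = ∑ i ∈ range (n+3),
          (if i = 0 then 0 else (Nat.choose (n+2+(i-1)) (2*(i-1)+1) : ℂ) * t^(2*i)) := by
    rw [Finset.sum_range_succ' (fun i => if i = 0 then 0 else
      (Nat.choose (n+2+(i-1)) (2*(i-1)+1) : ℂ) * t^(2*i)) (n+2)]
    rw [if_pos rfl, add_zero, Finset.mul_sum]
    refine Finset.sum_congr rfl fun i _ => ?_
    rw [if_neg (Nat.succ_ne_zero i)]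
    simp only [Nat.add_sub_cancel]
    ring
  rw [add_mul, e3, e2, e1, two_mul, ← Finset.sum_add_distrib, ← Finset.sum_add_distrib,
    ← Finset.sum_sub_distrib]
  refine Finset.sum_congr rfl fun i _ => ?_
  rcases i with _ | j
  · norm_num; ring
  · rw [if_neg (Nat.succ_ne_zero j)]
    simp only [Nat.add_sub_cancel]
    have key : Nat.choose (n+3+(j+1)) (2*(j+1)+1) + Nat.choose (n+1+(j+1)) (2*(j+1)+1)
        = 2 * Nat.choose (n+2+(j+1)) (2*(j+1)+1) + Nat.choose (n+2+j) (2*j+1) := by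
      have h1 : (n+j+4).choose (2*j+3) = (n+j+3).choose (2*j+2) + (n+j+3).choose (2*j+3) :=
        Nat.choose_succ_succ (n+j+3) (2*j+2)
      have h2 : (n+j+3).choose (2*j+2) = (n+j+2).choose (2*j+1) + (n+j+2).choose (2*j+2) :=
        Nat.choose_succ_succ (n+j+2) (2*j+1)
      have h3 : (n+j+3).choose (2*j+3) = (n+j+2).choose (2*j+2) + (n+j+2).choose (2*j+3) :=
        Nat.choose_succ_succ (n+j+2) (2*j+2)
      have r1 : n+3+(j+1) = n+j+4 := by omega
      have r2 : n+1+(j+1) = n+j+2 := by omega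
      have r3 : n+2+(j+1) = n+j+3 := by omega
      have r4 : n+2+j = n+j+2 := by omega
      have r5 : 2*(j+1)+1 = 2*j+3 := by omega
      rw [r1, r2, r3, r4, r5]
      omega
    have hc := congrArg (fun m : ℕ => (m : ℂ) * t^(2*(j+1))) key
    push_cast at hc
    linear_combination hc

open Finset in
private theorem Sformula (t v : ℂ) (hv : v = 2 + t ^ 2) (S : ℤ → ℂ)
    (h0 : S 0 = 1) (h1 : S 1 = v)
    (hrec : ∀ k : ℤ, S (k + 1) = v * S k - S (k - 1)) :
    ∀ n : ℕ, S n = ∑ i ∈ range (n+1), (Nat.choose (n+1+i) (2*i+1) : ℂ) * t^(2*i) := by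
  have step : ∀ n : ℕ,
      (S n = ∑ i ∈ range (n+1), (Nat.choose (n+1+i) (2*i+1) : ℂ) * t^(2*i)) ∧
      (S (n+1) = ∑ i ∈ range (n+2), (Nat.choose (n+2+i) (2*i+1) : ℂ) * t^(2*i)) := by
    intro n
    induction n with
    | zero =>
      constructor
      · simpa using h0
      · push_cast
        rw [h1, hv]
        simp [Finset.sum_range_succ]
    | succ m ih =>
      refine ⟨ih.2, ?_⟩
      have hr := hrec ((m:ℤ)+1)
      have c1 : ((m:ℤ)+1+1) = (((m+1 : ℕ) : ℤ) + 1) := by push_cast; ring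
      have c2 : ((m:ℤ)+1-1) = ((m : ℕ) : ℤ) := by ring
      rw [c1, c2] at hr
      rw [hr, ih.1, ih.2, hv]
      have hs := sumrec t m
      rw [show m+1+2 = m+3 by omega]
      exact hs.symm
  exact fun n => (step n).1

theorem A_polynomial_factor_G_even
    (x t v : ℂ) (hv : v = 2 + t ^ 2)
    (S : ℤ → ℂ)
    (h0 : S 0 = 1) (h1 : S 1 = v)
    (hrec : ∀ k : ℤ, S (k + 1) = v * S k - S (k - 1)) :
    ∀ n : ℕ,
      (x + t) * S n - (x - t) * S ((n : ℤ) - 1)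
        = (∑ i ∈ Finset.range (n + 1),
            ((Nat.choose (n + 1 + i) (2 * i + 1) : ℂ)
              + (Nat.choose (n + i) (2 * i + 1) : ℂ)) * t ^ (2 * i + 1))
          + x * ∑ i ∈ Finset.range (n + 1),
              (Nat.choose (n + i) (2 * i) : ℂ) * t ^ (2 * i) := by
  have hSm1 : S (-1) = 0 := by
    have := hrec 0
    simp only [zero_add, zero_sub] at this
    rw [h0, h1] at this
    linear_combination this
  intro n
  rcases n with _ | m
  · -- n = 0
    norm_num [hSm1, h0]
    ring
  · -- n = m + 1
    have hP1 := Sformula t v hv S h0 h1 hrec (m+1)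
    have hP0 := Sformula t v hv S h0 h1 hrec m
    have cn : (((m+1 : ℕ) : ℤ) - 1) = ((m : ℕ) : ℤ) := by push_cast; ring
    rw [cn, hP1, hP0]
    -- extend hP0's sum to range (m+2)
    have hext : ∑ i ∈ Finset.range (m+1), (Nat.choose (m+1+i) (2*i+1) : ℂ) * t^(2*i)
        = ∑ i ∈ Finset.range (m+2), (Nat.choose (m+1+i) (2*i+1) : ℂ) * t^(2*i) := by
      refine Finset.sum_subset (Finset.range_subset_range.mpr (by omega)) fun i _ hi => ?_
      simp only [Finset.mem_range, not_lt] at hi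
      rw [Nat.choose_eq_zero_of_lt (by omega)]
      simp
    rw [hext, show m+1+1 = m+2 by omega]
    have hterm : ∀ i ∈ Finset.range (m+2),
        (x + t) * ((Nat.choose (m+2+i) (2*i+1) : ℂ) * t^(2*i))
          - (x - t) * ((Nat.choose (m+1+i) (2*i+1) : ℂ) * t^(2*i))
        = ((Nat.choose (m+2+i) (2*i+1) : ℂ) + (Nat.choose (m+1+i) (2*i+1) : ℂ)) * t^(2*i+1)
          + x * ((Nat.choose (m+1+i) (2*i) : ℂ) * t^(2*i)) := by
      intro i _
      have pas : Nat.choose (m+2+i) (2*i+1)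
          = Nat.choose (m+1+i) (2*i) + Nat.choose (m+1+i) (2*i+1) := by
        have r1 : m+2+i = (m+1+i)+1 := by omega
        rw [r1]
        exact Nat.choose_succ_succ (m+1+i) (2*i)
      have hc := congrArg (fun k : ℕ => (k : ℂ)) pas
      push_cast at hc
      linear_combination x * t^(2*i) * hc
    have hsum := Finset.sum_congr rfl hterm
    rw [Finset.sum_sub_distrib, Finset.sum_add_distrib, ← Finset.mul_sum, ← Finset.mul_sum,
      ← Finset.mul_sum] at hsum
    linear_combination hsum
end
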